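/- Let (X_i)_{i≥0} ⊂ 𝕆^{n×k} be a sequence generated by the SCF iteration: for each i ≥ 1 there exist X̂_i ∈ 𝕆^{n×k} that is an orthonormal basis matrix of the invariant subspace of E(X_{i−1}) associated with its k largest eigenvalues (i.e. E(X_{i−1})·X̂_i = X̂_i·(X̂_iᵀE(X_{i−1})X̂_i) and tr(X̂_iᵀE(X_{i−1})X̂_i) = λ₁(E(X_{i−1})) + ⋯ + λ_k(E(X_{i−1}))) and a singular value decomposition X̂_iᵀD = U_iΣ_iV_iᵀ such that X_i = X̂_iU_iV_iᵀ; assume moreover tr(X₀ᵀAX₀ + X₀ᵀD) ≥ 0 in case 0 < θ < 1. Suppose a subsequence (X_i)_{i∈ℐ} converges to X_* ∈ 𝕆^{n×k} and that λ_k(E(X_*)) − λ_{k+1}(E(X_*)) > 0. Then X_* satisfies the KKT condition: E(X_*)·X_* = X_*·(X_*ᵀE(X_*)X_*) and X_*ᵀD is symmetric; moreover X_*ᵀD is positive semidefinite and X_* is an orthonormal basis matrix of the invariant subspace of E(X_*) associated with its k largest eigenvalues. -/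

import Mathlib

open Matrix Filter

noncomputable section

/-- `f₁(X) = tr(XᵀAX + XᵀD) / tr(XᵀBX)`. -/
def f1 {n k : ℕ} (A B : Matrix (Fin n) (Fin n) ℝ) (D : Matrix (Fin n) (Fin k) ℝ)
    (X : Matrix (Fin n) (Fin k) ℝ) : ℝ :=
  (trace (Xᵀ * A * X) + trace (Xᵀ * D)) / trace (Xᵀ * B * X)

/-- `E(X) = (2/(tr(XᵀBX))^θ) · [A + (DXᵀ + XDᵀ)/2 − θ f₁(X) B]`. -/
def Emat {n k : ℕ} (A B : Matrix (Fin n) (Fin n) ℝ) (D : Matrix (Fin n) (Fin k) ℝ)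
    (θ : ℝ) (X : Matrix (Fin n) (Fin k) ℝ) : Matrix (Fin n) (Fin n) ℝ :=
  (2 / trace (Xᵀ * B * X) ^ θ) •
    (A + (2⁻¹ : ℝ) • (D * Xᵀ + X * Dᵀ) - (θ * f1 A B D X) • B)


/-!
By Ky Fan's inequality, `tr(YᵀE(X)Y)` over orthonormal `Y` is at most `λ₁ + ⋯ + λ_k` of `E(X)`,
with a defect of at least `(λ_k − λ_{k+1})` times the mass of `Y` outside the top eigenspace.
One SCF step passes from `Y = X_i` to this maximum `K_i`; the Procrustes bound
`tr(X_iᵀ X̂ X̂ᵀ D) ≤ tr(Σ) = tr(X_{i+1}ᵀ D)` for the post-processing and Bernoulli's inequality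
for `s ↦ s^θ` show that `K_i − tr(X_iᵀE(X_i)X_i)` is at most a bounded multiple of
`f_θ(X_{i+1}) − f_θ(X_i)`. Hence `f_θ` increases along the iteration, its increments vanish along
the convergent subsequence, and in the limit `X_*` maximizes `tr(YᵀE(X_*)Y)`, so
`tr(X_*ᵀE(X_*)X_*) = λ₁ + ⋯ + λ_k`. With a gap, equality in Ky Fan's inequality puts the columns
of `X_*` into the top eigenspace, which is the KKT equation. Finally `X_{i+1}ᵀD = VΣVᵀ` is
positive semidefinite after every step, and so is the limit `X_*ᵀD`.
-/

section Orthonormal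

variable {m n : Type*} [Fintype m] [Fintype n]

theorem trace_transpose_mul_mul_pos [DecidableEq n] {B : Matrix m m ℝ} (hB : B.PosSemidef)
    (hrank : Fintype.card m - Fintype.card n < B.rank) {X : Matrix m n ℝ} (hX : Xᵀ * X = 1) :
    0 < trace (Xᵀ * B * X) := by
  have hpsd : (Xᵀ * B * X).PosSemidef := by
    simpa [conjTranspose_eq_transpose_of_trivial] using hB.conjTranspose_mul_mul_same X
  refine hpsd.trace_nonneg.lt_of_ne fun h ↦ ?_
  have hzero := hpsd.trace_eq_zero_iff.1 h.symm
  have hBX : B * X = 0 := by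
    ext i j
    have hj : star (fun l ↦ X l j) ⬝ᵥ B *ᵥ (fun l ↦ X l j) = (Xᵀ * B * X) j j := by
      simp only [Matrix.mul_apply, dotProduct, mulVec, transpose_apply, star_trivial,
        Finset.mul_sum, Finset.sum_mul]
      exact Finset.sum_comm.trans
        (Finset.sum_congr rfl fun _ _ ↦ Finset.sum_congr rfl fun _ _ ↦ by ring)
    rw [hzero, Matrix.zero_apply, hB.dotProduct_mulVec_zero_iff] at hj
    simpa [Matrix.mul_apply, mulVec, dotProduct] using congrFun hj i
  have hXrank : X.rank = Fintype.card n := by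
    rw [← rank_transpose_mul_self, hX, rank_one]
  have := rank_add_rank_le_card_of_mul_eq_zero hBX
  omega

theorem trace_transpose_mul_mul_le_trace [DecidableEq n] {B : Matrix m m ℝ} (hB : B.PosSemidef)
    {X : Matrix m n ℝ} (hX : Xᵀ * X = 1) : trace (Xᵀ * B * X) ≤ trace B := by
  classical
  set P := 1 - X * Xᵀ
  have hPt : Pᵀ = P := by simp [P]
  have hPP : P * P = P := by
    simp only [P, sub_mul, mul_sub, one_mul, mul_one, Matrix.mul_assoc,
      ← Matrix.mul_assoc Xᵀ X, hX, Matrix.one_mul]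
    abel
  have hPSD : (Pᵀ * B * P).PosSemidef := by
    simpa [conjTranspose_eq_transpose_of_trivial] using hB.conjTranspose_mul_mul_same P
  have key : trace (Pᵀ * B * P) = trace B - trace (Xᵀ * B * X) := by
    rw [hPt, trace_mul_cycle, hPP, trace_mul_cycle Xᵀ, sub_mul, trace_sub, Matrix.one_mul]
  linarith [hPSD.trace_nonneg]

theorem trace_transpose_mul_diagonal_mul [DecidableEq m] (μ : m → ℝ) (Z : Matrix m n ℝ) :
    trace (Zᵀ * diagonal μ * Z) = ∑ i, μ i * ∑ j, Z i j ^ 2 := by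
  rw [Matrix.mul_assoc, trace_mul_comm, Matrix.mul_assoc]
  simp only [trace, diag, diagonal_mul]
  simp only [Matrix.mul_apply, transpose_apply, sq]

theorem sum_sq_row_le_one [DecidableEq m] [DecidableEq n] {Z : Matrix m n ℝ} (hZ : Zᵀ * Z = 1)
    (i : m) : ∑ j, Z i j ^ 2 ≤ 1 := by
  have h := trace_transpose_mul_mul_le_trace
    (PosSemidef.diagonal (Pi.single_nonneg.2 zero_le_one : 0 ≤ Pi.single i (1 : ℝ))) hZ
  simpa [trace_transpose_mul_diagonal_mul, Pi.single_apply] using h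

theorem sum_sum_sq_eq_card [DecidableEq m] [DecidableEq n] {Z : Matrix m n ℝ} (hZ : Zᵀ * Z = 1) :
    ∑ i, ∑ j, Z i j ^ 2 = Fintype.card n := by
  simpa [hZ] using (trace_transpose_mul_diagonal_mul 1 Z).symm

end Orthonormal

section KyFan

variable {n k : ℕ}

theorem sum_castLE_eq_sum_ite (hkn : k ≤ n) (f : Fin n → ℝ) :
    ∑ j : Fin k, f (Fin.castLE hkn j) = ∑ i : Fin n, if i.val < k then f i else 0 :=
  Fintype.sum_of_injective _ (Fin.castLE_injective hkn) _ _
    (fun i hi ↦ if_neg fun h ↦ hi ⟨⟨i, h⟩, rfl⟩) (fun j ↦ (if_pos j.isLt).symm)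

theorem sum_mul_add_gap_mul_le_sum_top (hkn : k < n) {μ : Fin n → ℝ} (hμ : Antitone μ)
    {s : Fin n → ℝ} (hs0 : ∀ i, 0 ≤ s i) (hs1 : ∀ i, s i ≤ 1) (hs : ∑ i, s i = k) :
    ∑ i, μ i * s i + (μ ⟨k - 1, by omega⟩ - μ ⟨k, hkn⟩) * ∑ i with k ≤ i.val, s i
      ≤ ∑ j : Fin k, μ (Fin.castLE hkn.le j) := by
  set c := μ ⟨k - 1, by omega⟩
  set d := μ ⟨k, hkn⟩
  -- compare `s` termwise with the indicator of the first `k` indices, which has the same sum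
  have hterm : ∀ i, μ i * s i + (c - d) * (if k ≤ i.val then s i else 0)
      ≤ (if i.val < k then μ i else 0) - c * ((if i.val < k then 1 else 0) - s i) := by
    intro i
    by_cases hi : i.val < k
    · have : c ≤ μ i := hμ (Fin.mk_le_mk.2 (by omega))
      simp only [hi, if_true, if_neg (not_le.2 hi)]
      nlinarith [mul_le_mul_of_nonneg_right this (sub_nonneg.2 (hs1 i))]
    · have : μ i ≤ d := hμ (Fin.mk_le_mk.2 (by omega))
      simp only [hi, if_false, if_pos (not_lt.1 hi)]
      nlinarith [mul_le_mul_of_nonneg_right this (hs0 i)]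
  have hk : ∑ i : Fin n, (if i.val < k then (1 : ℝ) else 0) = k := by
    simpa using (sum_castLE_eq_sum_ite hkn.le fun _ ↦ (1 : ℝ)).symm
  calc _ = ∑ i, (μ i * s i + (c - d) * if k ≤ i.val then s i else 0) := by
        rw [Finset.sum_add_distrib, ← Finset.mul_sum, Finset.sum_filter]
    _ ≤ ∑ i, ((if i.val < k then μ i else 0) - c * ((if i.val < k then 1 else 0) - s i)) :=
        Finset.sum_le_sum fun i _ ↦ hterm i
    _ = _ := by
        rw [Finset.sum_sub_distrib, ← Finset.mul_sum, Finset.sum_sub_distrib, hk, hs, sub_self,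
          mul_zero, sub_zero, sum_castLE_eq_sum_ite]

theorem kyFan_add_gap_le (hkn : k < n) {μ : Fin n → ℝ} (hμ : Antitone μ)
    {Q : Matrix (Fin n) (Fin n) ℝ} (hQ : Qᵀ * Q = 1) {Y : Matrix (Fin n) (Fin k) ℝ}
    (hY : Yᵀ * Y = 1) :
    trace (Yᵀ * (Q * diagonal μ * Qᵀ) * Y)
        + (μ ⟨k - 1, by omega⟩ - μ ⟨k, hkn⟩) * ∑ i with k ≤ i.val, ∑ j, (Qᵀ * Y) i j ^ 2
      ≤ ∑ j : Fin k, μ (Fin.castLE hkn.le j) := by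
  have hZ : (Qᵀ * Y)ᵀ * (Qᵀ * Y) = 1 := by
    rw [transpose_mul, transpose_transpose, Matrix.mul_assoc, ← Matrix.mul_assoc Q,
      mul_eq_one_comm.1 hQ, Matrix.one_mul, hY]
  have hconj : Yᵀ * (Q * diagonal μ * Qᵀ) * Y = (Qᵀ * Y)ᵀ * diagonal μ * (Qᵀ * Y) := by
    simp only [transpose_mul, transpose_transpose, Matrix.mul_assoc]
  rw [hconj, trace_transpose_mul_diagonal_mul]
  exact sum_mul_add_gap_mul_le_sum_top hkn hμ (fun i ↦ by positivity)
    (sum_sq_row_le_one hZ) (by simpa using sum_sum_sq_eq_card hZ)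

theorem kyFan_le (hkn : k < n) {μ : Fin n → ℝ} (hμ : Antitone μ)
    {Q : Matrix (Fin n) (Fin n) ℝ} (hQ : Qᵀ * Q = 1) {Y : Matrix (Fin n) (Fin k) ℝ}
    (hY : Yᵀ * Y = 1) :
    trace (Yᵀ * (Q * diagonal μ * Qᵀ) * Y) ≤ ∑ j : Fin k, μ (Fin.castLE hkn.le j) := by
  have hgap : 0 ≤ μ ⟨k - 1, by omega⟩ - μ ⟨k, hkn⟩ :=
    sub_nonneg.2 (hμ (Fin.mk_le_mk.2 (Nat.sub_le k 1)))
  have hrows : 0 ≤ ∑ i with k ≤ i.val, ∑ j, (Qᵀ * Y) i j ^ 2 :=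
    Finset.sum_nonneg fun _ _ ↦ by positivity
  linarith [kyFan_add_gap_le hkn hμ hQ hY, mul_nonneg hgap hrows]

theorem mul_eq_submatrix_mul_submatrix (hkn : k ≤ n) {l : Type*} (Q : Matrix (Fin n) (Fin n) ℝ)
    {Z : Matrix (Fin n) l ℝ} (hZ : ∀ i j, k ≤ i.val → Z i j = 0) :
    Q * Z = Q.submatrix id (Fin.castLE hkn) * Z.submatrix (Fin.castLE hkn) id := by
  ext i j
  simp only [Matrix.mul_apply, submatrix_apply, id]
  rw [sum_castLE_eq_sum_ite hkn fun l ↦ Q i l * Z l j]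
  refine Finset.sum_congr rfl fun l _ ↦ ?_
  split_ifs with hl
  · rfl
  · rw [hZ l j (not_lt.1 hl), mul_zero]

theorem conj_diagonal_mul_submatrix_castLE (hkn : k ≤ n) {μ : Fin n → ℝ}
    {Q : Matrix (Fin n) (Fin n) ℝ} (hQ : Qᵀ * Q = 1) :
    Q * diagonal μ * Qᵀ * Q.submatrix id (Fin.castLE hkn)
      = Q.submatrix id (Fin.castLE hkn) * diagonal (μ ∘ Fin.castLE hkn) := by
  have : Q * diagonal μ * Qᵀ * Q = Q * diagonal μ := by
    rw [Matrix.mul_assoc, hQ, Matrix.mul_one]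
  ext i j
  calc _ = (Q * diagonal μ * Qᵀ * Q) i (Fin.castLE hkn j) := rfl
    _ = _ := by simp [this, mul_diagonal]

theorem submatrix_castLE_transpose_mul_self (hkn : k ≤ n) {Q : Matrix (Fin n) (Fin n) ℝ}
    (hQ : Qᵀ * Q = 1) :
    (Q.submatrix id (Fin.castLE hkn))ᵀ * Q.submatrix id (Fin.castLE hkn) = 1 := by
  ext i j
  calc _ = (Qᵀ * Q) (Fin.castLE hkn i) (Fin.castLE hkn j) := rfl
    _ = _ := by simp [hQ, one_apply, (Fin.castLE_injective hkn).eq_iff]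

theorem trace_submatrix_castLE_eq_sum_top (hkn : k ≤ n) {μ : Fin n → ℝ}
    {Q : Matrix (Fin n) (Fin n) ℝ} (hQ : Qᵀ * Q = 1) :
    trace ((Q.submatrix id (Fin.castLE hkn))ᵀ * (Q * diagonal μ * Qᵀ)
      * Q.submatrix id (Fin.castLE hkn)) = ∑ j : Fin k, μ (Fin.castLE hkn j) := by
  rw [Matrix.mul_assoc, conj_diagonal_mul_submatrix_castLE hkn hQ, ← Matrix.mul_assoc,
    submatrix_castLE_transpose_mul_self hkn hQ, Matrix.one_mul, trace_diagonal]
  rfl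

end KyFan

theorem mul_eq_mul_transpose_mul_mul_of_eq_mul {m l : Type*} [Fintype m] [Fintype l]
    [DecidableEq l] {E : Matrix m m ℝ} {Y X : Matrix m l ℝ} {Λ W : Matrix l l ℝ}
    (hEY : E * Y = Y * Λ) (hY : Yᵀ * Y = 1) (hXY : X = Y * W) (hX : Xᵀ * X = 1) :
    E * X = X * (Xᵀ * E * X) := by
  have hW : Wᵀ * W = 1 := by
    rw [← hX, hXY, transpose_mul, Matrix.mul_assoc, ← Matrix.mul_assoc Yᵀ, hY, Matrix.one_mul]
  subst hXY
  calc E * (Y * W) = Y * (W * Wᵀ) * (Yᵀ * Y) * Λ * W := by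
        rw [mul_eq_one_comm.1 hW, hY, Matrix.mul_one, Matrix.mul_one, ← Matrix.mul_assoc, hEY]
    _ = _ := by simp only [transpose_mul, Matrix.mul_assoc, ← hEY]

section Gap

variable {n k : ℕ}

theorem exists_eq_submatrix_castLE_mul_of_trace_eq_sum_top (hkn : k < n) {μ : Fin n → ℝ}
    (hμ : Antitone μ) (hgap : μ ⟨k, hkn⟩ < μ ⟨k - 1, by omega⟩) {Q : Matrix (Fin n) (Fin n) ℝ}
    (hQ : Qᵀ * Q = 1) {X : Matrix (Fin n) (Fin k) ℝ} (hX : Xᵀ * X = 1)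
    (htr : trace (Xᵀ * (Q * diagonal μ * Qᵀ) * X) = ∑ j : Fin k, μ (Fin.castLE hkn.le j)) :
    ∃ W : Matrix (Fin k) (Fin k) ℝ, X = Q.submatrix id (Fin.castLE hkn.le) * W := by
  have hnonneg : ∀ i ∈ Finset.univ.filter (k ≤ ·.val), 0 ≤ ∑ j, (Qᵀ * X) i j ^ 2 :=
    fun _ _ ↦ by positivity
  have hzero : ∑ i with k ≤ i.val, ∑ j, (Qᵀ * X) i j ^ 2 = 0 := by
    have := kyFan_add_gap_le hkn hμ hQ hX
    rw [htr] at this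
    nlinarith [Finset.sum_nonneg hnonneg]
  have hrows : ∀ i j, k ≤ i.val → (Qᵀ * X) i j = 0 := fun i j hi ↦ by
    have := (Finset.sum_eq_zero_iff_of_nonneg hnonneg).1 hzero i (by simpa using hi)
    exact pow_eq_zero_iff two_ne_zero |>.1 <|
      (Finset.sum_eq_zero_iff_of_nonneg fun _ _ ↦ sq_nonneg _).1 this j (Finset.mem_univ _)
  refine ⟨(Qᵀ * X).submatrix (Fin.castLE hkn.le) id, ?_⟩
  rw [← mul_eq_submatrix_mul_submatrix hkn.le Q hrows, ← Matrix.mul_assoc, mul_eq_one_comm.1 hQ,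
    Matrix.one_mul]

theorem mul_eq_mul_transpose_mul_mul_of_trace_eq_sum_top (hkn : k < n) {μ : Fin n → ℝ}
    (hμ : Antitone μ) (hgap : μ ⟨k, hkn⟩ < μ ⟨k - 1, by omega⟩) {Q : Matrix (Fin n) (Fin n) ℝ}
    (hQ : Qᵀ * Q = 1) {X : Matrix (Fin n) (Fin k) ℝ} (hX : Xᵀ * X = 1)
    (htr : trace (Xᵀ * (Q * diagonal μ * Qᵀ) * X) = ∑ j : Fin k, μ (Fin.castLE hkn.le j)) :
    Q * diagonal μ * Qᵀ * X = X * (Xᵀ * (Q * diagonal μ * Qᵀ) * X) := by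
  obtain ⟨W, hW⟩ := exists_eq_submatrix_castLE_mul_of_trace_eq_sum_top hkn hμ hgap hQ hX htr
  exact mul_eq_mul_transpose_mul_mul_of_eq_mul (conj_diagonal_mul_submatrix_castLE hkn.le hQ)
    (submatrix_castLE_transpose_mul_self hkn.le hQ) hW hX

end Gap

section Procrustes

variable {m n : Type*} [Fintype m] [Fintype n]

theorem transpose_mul_self_mul_eq_one [DecidableEq n] {P : Matrix m n ℝ} {R : Matrix n n ℝ}
    (hP : Pᵀ * P = 1) (hR : Rᵀ * R = 1) : (P * R)ᵀ * (P * R) = 1 := by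
  rw [transpose_mul, Matrix.mul_assoc, ← Matrix.mul_assoc Pᵀ, hP, Matrix.one_mul, hR]

theorem trace_transpose_mul_mul_mul_orthogonal [DecidableEq n] {W : Matrix n n ℝ} (hW : W * Wᵀ = 1)
    (H : Matrix m n ℝ) (M : Matrix m m ℝ) :
    trace ((H * W)ᵀ * M * (H * W)) = trace (Hᵀ * M * H) := by
  calc trace ((H * W)ᵀ * M * (H * W)) = trace (Wᵀ * (Hᵀ * M * H * W)) := by
        simp only [transpose_mul, Matrix.mul_assoc]
    _ = trace (Hᵀ * M * H * (W * Wᵀ)) := by rw [trace_mul_comm, Matrix.mul_assoc]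
    _ = _ := by rw [hW, Matrix.mul_one]

theorem trace_transpose_mul_mul_diagonal_le [DecidableEq n] {P Q : Matrix m n ℝ} (hP : Pᵀ * P = 1)
    (hQ : Qᵀ * Q = 1) {σ : n → ℝ} (hσ : ∀ j, 0 ≤ σ j) :
    trace (Pᵀ * Q * diagonal σ) ≤ ∑ j, σ j := by
  have hdiag : ∀ j, (Pᵀ * Q) j j ≤ 1 := fun j ↦ by
    have hPj := congrFun (congrFun hP j) j
    have hQj := congrFun (congrFun hQ j) j
    simp only [Matrix.mul_apply, transpose_apply, one_apply_eq] at hPj hQj ⊢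
    have := Finset.sum_le_sum fun i (_ : i ∈ Finset.univ) ↦ two_mul_le_add_sq (P i j) (Q i j)
    simp only [Finset.sum_add_distrib, ← Finset.mul_sum, sq, hPj, hQj, mul_assoc] at this
    linarith
  simp only [trace, diag, mul_diagonal]
  exact Finset.sum_le_sum fun j _ ↦ mul_le_of_le_one_left (hσ j) (hdiag j)

theorem trace_transpose_mul_mul_le_sum_of_svd [DecidableEq n] {X H D : Matrix m n ℝ}
    {U V : Matrix n n ℝ} {σ : n → ℝ} (hX : Xᵀ * X = 1) (hH : Hᵀ * H = 1) (hU : Uᵀ * U = 1)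
    (hV : Vᵀ * V = 1) (hσ : ∀ j, 0 ≤ σ j) (hsvd : Hᵀ * D = U * diagonal σ * Vᵀ) :
    trace (Xᵀ * H * (Hᵀ * D)) ≤ ∑ j, σ j := by
  calc trace (Xᵀ * H * (Hᵀ * D)) = trace ((X * V)ᵀ * (H * U) * diagonal σ) := by
        rw [hsvd, transpose_mul, ← Matrix.mul_assoc, trace_mul_comm]
        simp only [Matrix.mul_assoc]
    _ ≤ _ := trace_transpose_mul_mul_diagonal_le (transpose_mul_self_mul_eq_one hX hV)
      (transpose_mul_self_mul_eq_one hH hU) hσ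

theorem transpose_mul_eq_of_svd [DecidableEq n] {H D : Matrix m n ℝ} {U V : Matrix n n ℝ}
    {σ : n → ℝ} (hU : Uᵀ * U = 1) (hsvd : Hᵀ * D = U * diagonal σ * Vᵀ) :
    (H * U * Vᵀ)ᵀ * D = V * diagonal σ * Vᵀ := by
  rw [transpose_mul, transpose_mul, transpose_transpose, Matrix.mul_assoc, Matrix.mul_assoc, hsvd,
    ← Matrix.mul_assoc Uᵀ, ← Matrix.mul_assoc Uᵀ, hU, Matrix.one_mul, Matrix.mul_assoc]

end Procrustes

theorem isClosed_setOf_posSemidef {n : Type*} [Fintype n] :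
    IsClosed {M : Matrix n n ℝ | M.PosSemidef} := by
  simp only [posSemidef_iff_dotProduct_mulVec, Set.ofPred_and, Set.ofPred_forall, IsHermitian]
  exact (isClosed_eq continuous_id.matrix_conjTranspose continuous_id).inter
    (isClosed_iInter fun x ↦ isClosed_le continuous_const (by fun_prop))

theorem Monotone.tendsto_succ_sub_of_tendsto_comp {F : ℕ → ℝ} (hF : Monotone F) {φ : ℕ → ℕ}
    (hφ : StrictMono φ) {L : ℝ} (h : Tendsto (F ∘ φ) atTop (nhds L)) :
    Tendsto (fun t ↦ F (φ t + 1) - F (φ t)) atTop (nhds 0) := by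
  have hsucc : Tendsto (fun t ↦ F (φ t + 1)) atTop (nhds L) :=
    tendsto_of_tendsto_of_tendsto_of_le_of_le h (h.comp (tendsto_add_atTop_nat 1))
      (fun t ↦ hF (Nat.le_succ _)) (fun t ↦ hF (hφ (Nat.lt_succ_self t)))
  simpa using hsucc.sub h

-- Bernoulli's inequality `(b' / b) ^ θ ≤ 1 + θ (b' / b - 1)`, multiplied by `a`.
theorem sub_le_rpow_mul_sub_div_rpow {θ a b a' b' : ℝ} (hθ0 : 0 ≤ θ) (hθ1 : θ ≤ 1)
    (hb : 0 < b) (hb' : 0 < b') (ha : 0 < θ → θ < 1 → 0 ≤ a) :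
    a' - θ * (a / b) * b' - (1 - θ) * a ≤ b' ^ θ * (a' / b' ^ θ - a / b ^ θ) := by
  have hbern : a * (b' / b) ^ θ ≤ a * (1 + θ * (b' / b - 1)) := by
    rcases hθ0.eq_or_lt with rfl | hθ0'
    · simp
    rcases hθ1.eq_or_lt with rfl | hθ1'
    · simp
    have := rpow_one_add_le_one_add_mul_self (s := b' / b - 1)
      (by linarith [div_pos hb' hb]) hθ0 hθ1
    rw [add_sub_cancel] at this
    exact mul_le_mul_of_nonneg_left this (ha hθ0' hθ1')
  have hrhs : b' ^ θ * (a' / b' ^ θ - a / b ^ θ) = a' - a * (b' / b) ^ θ := by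
    have := (Real.rpow_pos_of_pos hb θ).ne'
    have := (Real.rpow_pos_of_pos hb' θ).ne'
    rw [Real.div_rpow hb'.le hb.le]
    field_simp
  have hlin : a * (1 + θ * (b' / b - 1)) = θ * (a / b) * b' + (1 - θ) * a := by
    field_simp
    ring
  linarith

section SCF

variable {n k : ℕ}

def fθ (A B : Matrix (Fin n) (Fin n) ℝ) (D : Matrix (Fin n) (Fin k) ℝ) (θ : ℝ)
    (X : Matrix (Fin n) (Fin k) ℝ) : ℝ :=
  (trace (Xᵀ * A * X) + trace (Xᵀ * D)) / trace (Xᵀ * B * X) ^ θ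

def IsSCFStep (hkn : k < n) (A B : Matrix (Fin n) (Fin n) ℝ) (D : Matrix (Fin n) (Fin k) ℝ)
    (θ : ℝ) (X X' : Matrix (Fin n) (Fin k) ℝ) : Prop :=
  ∃ (Xh : Matrix (Fin n) (Fin k) ℝ) (U V : Matrix (Fin k) (Fin k) ℝ)
    (σ : Fin k → ℝ) (μ : Fin n → ℝ) (Q : Matrix (Fin n) (Fin n) ℝ),
    Xhᵀ * Xh = 1
    ∧ Antitone μ ∧ Qᵀ * Q = 1 ∧ Emat A B D θ X = Q * Matrix.diagonal μ * Qᵀ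
    ∧ Emat A B D θ X * Xh = Xh * (Xhᵀ * Emat A B D θ X * Xh)
    ∧ trace (Xhᵀ * Emat A B D θ X * Xh) = ∑ j : Fin k, μ (Fin.castLE hkn.le j)
    ∧ Uᵀ * U = 1 ∧ Vᵀ * V = 1 ∧ (∀ j, 0 ≤ σ j) ∧ Antitone σ
    ∧ Xhᵀ * D = U * Matrix.diagonal σ * Vᵀ
    ∧ X' = Xh * U * Vᵀ

variable {A B : Matrix (Fin n) (Fin n) ℝ} {D : Matrix (Fin n) (Fin k) ℝ} {θ : ℝ}

theorem continuousAt_Emat {X : Matrix (Fin n) (Fin k) ℝ} (hb : 0 < trace (Xᵀ * B * X)) :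
    ContinuousAt (Emat A B D θ) X := by
  unfold Emat f1
  fun_prop (disch := first | exact hb.ne' | exact Or.inl hb.ne' |
    exact (Real.rpow_pos_of_pos hb θ).ne')

theorem continuousAt_fθ {X : Matrix (Fin n) (Fin k) ℝ} (hb : 0 < trace (Xᵀ * B * X)) :
    ContinuousAt (fθ A B D θ) X := by
  unfold fθ
  fun_prop (disch := first | exact hb.ne' | exact Or.inl hb.ne' |
    exact (Real.rpow_pos_of_pos hb θ).ne')

theorem trace_transpose_mul_Emat_mul (X Y : Matrix (Fin n) (Fin k) ℝ) :
    trace (Yᵀ * Emat A B D θ X * Y) = 2 / trace (Xᵀ * B * X) ^ θ *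
      (trace (Yᵀ * A * Y) + trace (Xᵀ * Y * (Yᵀ * D)) - θ * f1 A B D X * trace (Yᵀ * B * Y)) := by
  have hD : trace (Yᵀ * (D * Xᵀ) * Y) = trace (Xᵀ * Y * (Yᵀ * D)) := by
    rw [show Yᵀ * (D * Xᵀ) * Y = Yᵀ * D * (Xᵀ * Y) by simp only [Matrix.mul_assoc],
      trace_mul_comm]
  have hD' : trace (Yᵀ * (X * Dᵀ) * Y) = trace (Xᵀ * Y * (Yᵀ * D)) := by
    rw [← hD, ← trace_transpose]
    simp only [transpose_mul, transpose_transpose, Matrix.mul_assoc]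
  simp only [Emat, Matrix.mul_smul, Matrix.smul_mul, trace_smul, Matrix.mul_add, Matrix.add_mul,
    Matrix.mul_sub, Matrix.sub_mul, trace_add, trace_sub, hD, hD', smul_eq_mul]
  ring

theorem trace_transpose_mul_Emat_mul_self {X : Matrix (Fin n) (Fin k) ℝ} (hX : Xᵀ * X = 1)
    (hb : 0 < trace (Xᵀ * B * X)) :
    trace (Xᵀ * Emat A B D θ X * X)
      = 2 / trace (Xᵀ * B * X) ^ θ * ((1 - θ) * (trace (Xᵀ * A * X) + trace (Xᵀ * D))) := by
  rw [trace_transpose_mul_Emat_mul, hX, Matrix.one_mul, f1]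
  field_simp

variable {hkn : k < n} {X X' : Matrix (Fin n) (Fin k) ℝ}

theorem IsSCFStep.exists_trace_le (h : IsSCFStep hkn A B D θ X X') (hX : Xᵀ * X = 1)
    (hb : 0 < trace (Xᵀ * B * X)) :
    ∃ K, (∀ Y : Matrix (Fin n) (Fin k) ℝ, Yᵀ * Y = 1 → trace (Yᵀ * Emat A B D θ X * Y) ≤ K) ∧
      K ≤ 2 / trace (Xᵀ * B * X) ^ θ * (trace (X'ᵀ * A * X') + trace (X'ᵀ * D)
        - θ * f1 A B D X * trace (X'ᵀ * B * X')) := by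
  obtain ⟨H, U, V, σ, μ, Q, hH, hμ, hQ, hE, -, htr, hU, hV, hσ, -, hsvd, rfl⟩ := h
  -- `K` is `λ₁ + ⋯ + λ_k` of `E(X)`, attained at `X̂ = H`
  refine ⟨trace (Hᵀ * Emat A B D θ X * H), fun Y hY ↦ ?_, ?_⟩
  · rw [htr, hE]
    exact kyFan_le hkn hμ hQ hY
  have hW : U * Vᵀ * (U * Vᵀ)ᵀ = 1 := by
    rw [transpose_mul, transpose_transpose, Matrix.mul_assoc, ← Matrix.mul_assoc Vᵀ, hV,
      Matrix.one_mul, mul_eq_one_comm.1 hU]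
  have hD : trace (Xᵀ * H * (Hᵀ * D)) ≤ trace ((H * (U * Vᵀ))ᵀ * D) := by
    rw [← Matrix.mul_assoc H, transpose_mul_eq_of_svd hU hsvd, trace_mul_cycle V, hV,
      Matrix.one_mul, trace_diagonal]
    exact trace_transpose_mul_mul_le_sum_of_svd hX hH hU hV hσ hsvd
  rw [trace_transpose_mul_Emat_mul, Matrix.mul_assoc H, trace_transpose_mul_mul_mul_orthogonal hW,
    trace_transpose_mul_mul_mul_orthogonal hW]
  exact mul_le_mul_of_nonneg_left (by linarith)
    (div_nonneg zero_le_two (Real.rpow_nonneg hb.le θ))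

theorem IsSCFStep.exists_bound (h : IsSCFStep hkn A B D θ X X') (hθ0 : 0 ≤ θ) (hθ1 : θ ≤ 1)
    (hX : Xᵀ * X = 1) (hb : 0 < trace (Xᵀ * B * X)) (hb' : 0 < trace (X'ᵀ * B * X'))
    (ha : 0 < θ → θ < 1 → 0 ≤ trace (Xᵀ * A * X) + trace (Xᵀ * D)) :
    ∃ K, (∀ Y : Matrix (Fin n) (Fin k) ℝ, Yᵀ * Y = 1 → trace (Yᵀ * Emat A B D θ X * Y) ≤ K) ∧
      K - trace (Xᵀ * Emat A B D θ X * X) ≤ 2 / trace (Xᵀ * B * X) ^ θ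
        * trace (X'ᵀ * B * X') ^ θ * (fθ A B D θ X' - fθ A B D θ X) := by
  obtain ⟨K, hK, hKle⟩ := h.exists_trace_le hX hb
  refine ⟨K, hK, ?_⟩
  have hbern := mul_le_mul_of_nonneg_left
    (sub_le_rpow_mul_sub_div_rpow (a' := trace (X'ᵀ * A * X') + trace (X'ᵀ * D)) hθ0 hθ1 hb hb' ha)
    (div_nonneg zero_le_two (Real.rpow_nonneg hb.le θ))
  rw [trace_transpose_mul_Emat_mul_self hX hb, mul_assoc, fθ, fθ]
  rw [f1] at hKle
  linarith

theorem IsSCFStep.fθ_le (h : IsSCFStep hkn A B D θ X X') (hθ0 : 0 ≤ θ) (hθ1 : θ ≤ 1)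
    (hX : Xᵀ * X = 1) (hb : 0 < trace (Xᵀ * B * X)) (hb' : 0 < trace (X'ᵀ * B * X'))
    (ha : 0 < θ → θ < 1 → 0 ≤ trace (Xᵀ * A * X) + trace (Xᵀ * D)) :
    fθ A B D θ X ≤ fθ A B D θ X' := by
  obtain ⟨K, hK, hKT⟩ := h.exists_bound hθ0 hθ1 hX hb hb' ha
  have hpos : 0 < 2 / trace (Xᵀ * B * X) ^ θ * trace (X'ᵀ * B * X') ^ θ :=
    mul_pos (div_pos two_pos (Real.rpow_pos_of_pos hb θ)) (Real.rpow_pos_of_pos hb' θ)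
  exact sub_nonneg.1 (nonneg_of_mul_nonneg_right (by linarith [hK X hX]) hpos)

theorem IsSCFStep.transpose_mul_posSemidef (h : IsSCFStep hkn A B D θ X X') :
    (X'ᵀ * D).PosSemidef := by
  obtain ⟨H, U, V, σ, -, -, -, -, -, -, -, -, hU, -, hσ, -, hsvd, rfl⟩ := h
  rw [transpose_mul_eq_of_svd hU hsvd]
  simpa [conjTranspose_eq_transpose_of_trivial] using
    (PosSemidef.diagonal hσ).mul_mul_conjTranspose_same V

end SCF

section SCFSequence

variable {n k : ℕ} (hkn : k < n) {A B : Matrix (Fin n) (Fin n) ℝ} {D : Matrix (Fin n) (Fin k) ℝ}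
  {θ : ℝ} {X : ℕ → Matrix (Fin n) (Fin k) ℝ}

theorem numerator_nonneg_of_isSCFStep (hθ0 : 0 ≤ θ) (hθ1 : θ ≤ 1) (hX : ∀ i, (X i)ᵀ * X i = 1)
    (hb : ∀ i, 0 < trace ((X i)ᵀ * B * X i))
    (hSCF : ∀ i, IsSCFStep hkn A B D θ (X i) (X (i + 1)))
    (hinit : 0 < θ → θ < 1 → 0 ≤ trace ((X 0)ᵀ * A * X 0) + trace ((X 0)ᵀ * D)) (i : ℕ) :
    0 < θ → θ < 1 → 0 ≤ trace ((X i)ᵀ * A * X i) + trace ((X i)ᵀ * D) := by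
  intro h0 h1
  induction i with
  | zero => exact hinit h0 h1
  | succ i ih =>
    have hF := (hSCF i).fθ_le hθ0 hθ1 (hX i) (hb i) (hb (i + 1)) fun _ _ ↦ ih
    have hpow := Real.rpow_pos_of_pos (hb (i + 1)) θ
    have := mul_nonneg ((div_nonneg ih (Real.rpow_nonneg (hb i).le θ)).trans hF) hpow.le
    rwa [fθ, div_mul_cancel₀ _ hpow.ne'] at this

theorem trace_transpose_mul_Emat_mul_le_of_tendsto (hB : B.PosSemidef) (hrank : n - k < B.rank)
    (hθ0 : 0 ≤ θ) (hθ1 : θ ≤ 1) (hX : ∀ i, (X i)ᵀ * X i = 1)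
    (hSCF : ∀ i, IsSCFStep hkn A B D θ (X i) (X (i + 1)))
    (hinit : 0 < θ → θ < 1 → 0 ≤ trace ((X 0)ᵀ * A * X 0) + trace ((X 0)ᵀ * D))
    {Xs : Matrix (Fin n) (Fin k) ℝ} (hXs : Xsᵀ * Xs = 1) {φ : ℕ → ℕ} (hφ : StrictMono φ)
    (hlim : Tendsto (X ∘ φ) atTop (nhds Xs)) {Y : Matrix (Fin n) (Fin k) ℝ} (hY : Yᵀ * Y = 1) :
    trace (Yᵀ * Emat A B D θ Xs * Y) ≤ trace (Xsᵀ * Emat A B D θ Xs * Xs) := by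
  have hb : ∀ {Z : Matrix (Fin n) (Fin k) ℝ}, Zᵀ * Z = 1 → 0 < trace (Zᵀ * B * Z) :=
    trace_transpose_mul_mul_pos hB (by simpa using hrank)
  have ha := numerator_nonneg_of_isSCFStep hkn hθ0 hθ1 hX (fun i ↦ hb (hX i)) hSCF hinit
  choose K hK hKT using fun i ↦
    (hSCF i).exists_bound hθ0 hθ1 (hX i) (hb (hX i)) (hb (hX (i + 1))) (ha i)
  set F := fun i ↦ fθ A B D θ (X i)
  have hmono : Monotone F := monotone_nat_of_le_succ fun i ↦
    (hSCF i).fθ_le hθ0 hθ1 (hX i) (hb (hX i)) (hb (hX (i + 1))) (ha i)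
  have hbs := hb hXs
  have hEcont := continuousAt_Emat (A := A) (D := D) (θ := θ) hbs
  have hc : ContinuousAt (fun Z : Matrix (Fin n) (Fin k) ℝ ↦ 2 / trace (Zᵀ * B * Z) ^ θ) Xs := by
    fun_prop (disch := first | exact hbs.ne' | exact Or.inl hbs.ne' |
      exact (Real.rpow_pos_of_pos hbs θ).ne')
  have hT : ContinuousAt (fun Z ↦ trace (Zᵀ * Emat A B D θ Z * Z)) Xs := by fun_prop
  have hYE : ContinuousAt (fun Z ↦ trace (Yᵀ * Emat A B D θ Z * Y)) Xs := by fun_prop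
  -- `K - tr(XᵀE(X)X)` is squeezed by a bounded multiple of the increments of the monotone,
  -- subsequentially convergent `F`
  have hKT0 : Tendsto (fun t ↦ K (φ t) - trace ((X (φ t))ᵀ * Emat A B D θ (X (φ t)) * X (φ t)))
      atTop (nhds 0) := by
    have hup := ((hc.tendsto.comp hlim).mul_const (trace B ^ θ)).mul
      (hmono.tendsto_succ_sub_of_tendsto_comp hφ ((continuousAt_fθ hbs).tendsto.comp hlim))
    rw [mul_zero] at hup
    refine tendsto_of_tendsto_of_tendsto_of_le_of_le tendsto_const_nhds hup
      (fun t ↦ sub_nonneg.2 (hK _ _ (hX _))) fun t ↦ (hKT (φ t)).trans ?_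
    have hinc : 0 ≤ F (φ t + 1) - F (φ t) := sub_nonneg.2 (hmono (Nat.le_succ _))
    have hcoef : 0 ≤ 2 / trace ((X (φ t))ᵀ * B * X (φ t)) ^ θ :=
      div_nonneg zero_le_two (Real.rpow_nonneg (hb (hX _)).le θ)
    have hpow : trace ((X (φ t + 1))ᵀ * B * X (φ t + 1)) ^ θ ≤ trace B ^ θ :=
      Real.rpow_le_rpow (hb (hX _)).le (trace_transpose_mul_mul_le_trace hB (hX _)) hθ0
    exact mul_le_mul_of_nonneg_right (mul_le_mul_of_nonneg_left hpow hcoef) hinc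
  have hKlim := hKT0.add (hT.tendsto.comp hlim)
  rw [zero_add] at hKlim
  exact le_of_tendsto_of_tendsto' (hYE.tendsto.comp hlim) (by simpa using hKlim)
    fun t ↦ hK (φ t) Y hY

end SCFSequence

/-- Theorem 4.3(d): an accumulation point `X_*` of the SCF iterates with eigenvalue gap
`λ_k(E(X_*)) > λ_{k+1}(E(X_*))` satisfies the KKT condition, `X_*ᵀD ⪰ 0`, and `X_*` spans
the invariant subspace of `E(X_*)` associated with its `k` largest eigenvalues. -/
theorem stmt16 {n k : ℕ} (hkn : k < n)
    (A B : Matrix (Fin n) (Fin n) ℝ) (hB : B.PosSemidef)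
    (hrank : n - k < B.rank)
    (D : Matrix (Fin n) (Fin k) ℝ) (θ : ℝ) (hθ0 : 0 ≤ θ) (hθ1 : θ ≤ 1)
    (X : ℕ → Matrix (Fin n) (Fin k) ℝ) (hX : ∀ i, (X i)ᵀ * X i = 1)
    -- the SCF iteration: `X (i+1)` is obtained from `X i` via an orthonormal eigenbasis
    -- matrix `X̂` of `E(X i)` for its `k` largest eigenvalues, followed by post-processing
    (hSCF : ∀ i : ℕ,
      ∃ (Xh : Matrix (Fin n) (Fin k) ℝ) (U V : Matrix (Fin k) (Fin k) ℝ)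
        (σ : Fin k → ℝ) (μ : Fin n → ℝ) (Q : Matrix (Fin n) (Fin n) ℝ),
        Xhᵀ * Xh = 1
        ∧ Antitone μ ∧ Qᵀ * Q = 1 ∧ Emat A B D θ (X i) = Q * Matrix.diagonal μ * Qᵀ
        ∧ Emat A B D θ (X i) * Xh = Xh * (Xhᵀ * Emat A B D θ (X i) * Xh)
        ∧ trace (Xhᵀ * Emat A B D θ (X i) * Xh) = ∑ j : Fin k, μ (Fin.castLE hkn.le j)
        ∧ Uᵀ * U = 1 ∧ Vᵀ * V = 1 ∧ (∀ j, 0 ≤ σ j) ∧ Antitone σ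
        ∧ Xhᵀ * D = U * Matrix.diagonal σ * Vᵀ
        ∧ X (i + 1) = Xh * U * Vᵀ)
    -- requirement on the initial guess in case `0 < θ < 1`
    (hinit : 0 < θ → θ < 1 → 0 ≤ trace ((X 0)ᵀ * A * X 0) + trace ((X 0)ᵀ * D))
    -- a subsequence converges (entrywise) to `X_*`
    (Xs : Matrix (Fin n) (Fin k) ℝ) (hXs : Xsᵀ * Xs = 1)
    (φ : ℕ → ℕ) (hφ : StrictMono φ)
    (hconv : ∀ i j, Tendsto (fun t => X (φ t) i j) atTop (nhds (Xs i j)))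
    -- eigenvalue gap `λ_k(E(X_*)) − λ_{k+1}(E(X_*)) > 0`
    (μs : Fin n → ℝ) (hμs : Antitone μs)
    (Qs : Matrix (Fin n) (Fin n) ℝ) (hQs : Qsᵀ * Qs = 1)
    (hEigs : Emat A B D θ Xs = Qs * Matrix.diagonal μs * Qsᵀ)
    (hgap : μs ⟨k, hkn⟩ < μs ⟨k - 1, by omega⟩) :
    Emat A B D θ Xs * Xs = Xs * (Xsᵀ * Emat A B D θ Xs * Xs)
      ∧ (Xsᵀ * D).IsSymm
      ∧ (Xsᵀ * D).PosSemidef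
      ∧ trace (Xsᵀ * Emat A B D θ Xs * Xs) = ∑ j : Fin k, μs (Fin.castLE hkn.le j) := by
  have hstep : ∀ i, IsSCFStep hkn A B D θ (X i) (X (i + 1)) := hSCF
  have hlim : Tendsto (X ∘ φ) atTop (nhds Xs) :=
    tendsto_pi_nhds.2 fun i ↦ tendsto_pi_nhds.2 (hconv i)
  have htop : trace (Xsᵀ * Emat A B D θ Xs * Xs) = ∑ j : Fin k, μs (Fin.castLE hkn.le j) := by
    refine le_antisymm (hEigs ▸ kyFan_le hkn hμs hQs hXs) ?_
    rw [← trace_submatrix_castLE_eq_sum_top hkn.le hQs, ← hEigs]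
    exact trace_transpose_mul_Emat_mul_le_of_tendsto hkn hB hrank hθ0 hθ1 hX hstep hinit hXs hφ
      hlim (submatrix_castLE_transpose_mul_self hkn.le hQs)
  have hpsd : (Xsᵀ * D).PosSemidef := by
    refine isClosed_setOf_posSemidef.mem_of_tendsto
      (((continuous_id.matrix_transpose.matrix_mul continuous_const).tendsto Xs).comp hlim) ?_
    filter_upwards [eventually_ge_atTop 1] with t ht
    obtain ⟨i, hi⟩ : ∃ i, φ t = i + 1 := ⟨φ t - 1, by have := hφ.le_apply (x := t); omega⟩
    simpa [hi] using (hstep i).transpose_mul_posSemidef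
  refine ⟨?_, isHermitian_iff_isSymm.1 hpsd.isHermitian, hpsd, htop⟩
  rw [hEigs] at htop ⊢
  exact mul_eq_mul_transpose_mul_mul_of_trace_eq_sum_top hkn hμs hgap hQs hXs htop

end
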